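/- Let 0 < α < 1, s < −1/2, and b₁, b₂ ∈ ℝ. Then there is no constant C > 0 such that the inequality ‖u·v‖_{L²(ℝ²)} ≤ C ‖⟨ξ⟩^{−1/2} ⟨τ − αξ³⟩^{b₁} ũ(ξ,τ)‖_{L²_{ξ,τ}(ℝ²)} · ‖⟨ξ⟩^{s} ⟨τ − ξ³⟩^{b₂} ṽ(ξ,τ)‖_{L²_{ξ,τ}(ℝ²)} holds for all functions u, v : ℝ² → ℂ whose space-time Fourier transforms are bounded measurable functions with compact support. That is, for every C > 0 there exist such u, v violating the inequality. -/

import Mathlib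

/-!
Take for `ũ, ṽ` the indicators of boxes of size `N⁻² × 1` lying on the curves `τ = α ξ³` near
`ξ = N` and `τ = ξ³` near `ξ = -N`. On these boxes the weights are at most a constant times
`N^(-1/2)` and `N^s`, so the right-hand side is `O(N^(s - 5/2))`. The phase of the inverse
Fourier integral varies by at most `1/2` on a box when `|x| ≲ N²` and `|t| ≲ 1`, so on this
region of area `≍ N²` we have `|u|, |v| ≳ N⁻²`, whence `‖u v‖₂ ≳ N⁻⁴ · N = N⁻³`. As `s < -1/2`,
this beats `N^(s - 5/2)` for large `N`.
-/

open MeasureTheory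

/-- Inverse space-time Fourier transform on `ℝ²`:
`u(x,t) = (2π)⁻² ∫ e^{i(xξ+tτ)} g(ξ,τ) dξ dτ`.  A function `u : ℝ² → ℂ` whose
space-time Fourier transform is the (nice) function `g` is recovered from `g`
by this formula. -/
noncomputable def spaceTimeFourierInv (g : ℝ × ℝ → ℂ) : ℝ × ℝ → ℂ :=
  fun q => (((2 * Real.pi) ^ 2 : ℝ) : ℂ)⁻¹ * ∫ p : ℝ × ℝ,
    Complex.exp (Complex.I * ((q.1 * p.1 + q.2 * p.2 : ℝ) : ℂ)) * g p

/-- `g` is a bounded measurable function with compact support. -/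
def BddMeasCompSupp (g : ℝ × ℝ → ℂ) : Prop :=
  Measurable g ∧ (∃ M : ℝ, ∀ p, ‖g p‖ ≤ M) ∧ HasCompactSupport g

open Set Filter Complex
open scoped ENNReal

section

variable {X E F : Type*} [MeasurableSpace X] {μ : Measure X} {s : Set X}
  [NormedAddCommGroup E] [NormedSpace ℝ E] [CompleteSpace E] [NormedAddCommGroup F]

theorem sub_mul_measureReal_le_norm_setIntegral {f : X → E} {c : E} {ε : ℝ}
    (hs : μ s < ∞) (hf : IntegrableOn f s μ) (hfc : ∀ x ∈ s, ‖f x - c‖ ≤ ε) :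
    (‖c‖ - ε) * μ.real s ≤ ‖∫ x in s, f x ∂μ‖ := by
  have hsplit : μ.real s • c = (∫ x in s, f x ∂μ) - ∫ x in s, (f x - c) ∂μ := by
    rw [integral_sub hf (integrableOn_const hs.ne), setIntegral_const, sub_sub_cancel]
  have hnorm : ‖μ.real s • c‖ = μ.real s * ‖c‖ := by
    rw [norm_smul, Real.norm_of_nonneg measureReal_nonneg]
  have := norm_sub_le (∫ x in s, f x ∂μ) (∫ x in s, (f x - c) ∂μ)
  rw [← hsplit, hnorm] at this
  linarith [norm_setIntegral_le_of_norm_le_const hs hfc]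

variable {p : ℝ≥0∞} {m : ℝ}

theorem ofReal_mul_measure_rpow_le_eLpNorm {f : X → F} (hm : 0 ≤ m) (hs : MeasurableSet s)
    (hp : p ≠ 0) (hp_top : p ≠ ∞) (hf : ∀ x ∈ s, m ≤ ‖f x‖) :
    ENNReal.ofReal m * μ s ^ (1 / p.toReal) ≤ eLpNorm f p μ := by
  rw [← Real.enorm_of_nonneg hm, ← eLpNorm_indicator_const hs hp hp_top]
  refine eLpNorm_mono fun x => ?_
  by_cases hx : x ∈ s
  · simpa [hx, abs_of_nonneg hm] using hf x hx
  · simp [hx]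

theorem eLpNorm_le_ofReal_mul_measure_rpow {f : X → F} (hm : 0 ≤ m) (hs : MeasurableSet s)
    (hp : p ≠ 0) (hp_top : p ≠ ∞) (hf : ∀ x, ‖f x‖ ≤ s.indicator (fun _ => m) x) :
    eLpNorm f p μ ≤ ENNReal.ofReal m * μ s ^ (1 / p.toReal) := by
  rw [← Real.enorm_of_nonneg hm, ← eLpNorm_indicator_const hs hp hp_top]
  exact eLpNorm_mono_real hf

end

theorem norm_exp_I_mul_ofReal_sub_exp_le (θ θ₀ : ℝ) :
    ‖exp (I * θ) - exp (I * θ₀)‖ ≤ |θ - θ₀| := by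
  have hfactor : exp (I * θ) - exp (I * θ₀) = exp (I * θ₀) * (exp (I * ↑(θ - θ₀)) - 1) := by
    rw [mul_sub, ← Complex.exp_add]; push_cast; ring_nf
  rw [hfactor, norm_mul, Complex.norm_exp_I_mul_ofReal, one_mul]
  exact Real.norm_exp_I_mul_ofReal_sub_one_le

theorem Real.rpow_le_rpow_abs_of_one_le {x K : ℝ} (b : ℝ) (hx : 1 ≤ x) (hxK : x ≤ K) :
    x ^ b ≤ K ^ |b| :=
  (Real.rpow_le_rpow_of_exponent_le hx (le_abs_self b)).trans
    (Real.rpow_le_rpow (by linarith) hxK (abs_nonneg b))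

theorem volume_Icc_prod_real (a b c d : ℝ) :
    volume (Icc (a, c) (b, d)) = ENNReal.ofReal (b - a) * ENNReal.ofReal (d - c) := by
  rw [← Icc_prod_Icc, Measure.volume_eq_prod, Measure.prod_prod, Real.volume_Icc, Real.volume_Icc]

theorem ENNReal.ofReal_sq_rpow_one_div_two {x : ℝ} (hx : 0 ≤ x) :
    ENNReal.ofReal (x ^ 2) ^ (1 / (2 : ℝ≥0∞).toReal) = ENNReal.ofReal x := by
  rw [ENNReal.ofReal_rpow_of_nonneg (by positivity) (by norm_num)]
  norm_num [← Real.sqrt_eq_rpow, Real.sqrt_sq, hx]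

theorem abs_cube_sub_cube_le {a ξ N : ℝ} (hN : 1 ≤ N) (ha : |a| ≤ N) (hξ : |ξ - a| ≤ N⁻¹ ^ 2) :
    |ξ ^ 3 - a ^ 3| ≤ 7 := by
  have hN0 : 0 < N := by linarith
  have hδ : N⁻¹ ^ 2 * N ^ 2 = 1 := by field_simp
  have hξN : |ξ| ≤ 2 * N := by
    have : N⁻¹ ^ 2 ≤ 1 := pow_le_one₀ (by positivity) (inv_le_one_of_one_le₀ hN)
    linarith [abs_sub_abs_le_abs_sub ξ a]
  have hquad : |ξ ^ 2 + ξ * a + a ^ 2| ≤ 7 * N ^ 2 := by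
    calc |ξ ^ 2 + ξ * a + a ^ 2| ≤ |ξ| ^ 2 + |ξ| * |a| + |a| ^ 2 := by
          rw [← abs_pow, ← abs_pow, ← abs_mul]
          exact (abs_add_le _ _).trans (by gcongr; exact abs_add_le _ _)
      _ ≤ 7 * N ^ 2 := by nlinarith [abs_nonneg ξ, abs_nonneg a]
  calc |ξ ^ 3 - a ^ 3| = |ξ - a| * |ξ ^ 2 + ξ * a + a ^ 2| := by rw [← abs_mul]; ring_nf
    _ ≤ N⁻¹ ^ 2 * (7 * N ^ 2) := mul_le_mul hξ hquad (abs_nonneg _) (by positivity)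
    _ = 7 := by linear_combination 7 * hδ

theorem exists_one_le_mul_rpow_lt {e : ℝ} (he : e < 0) (K : ℝ) {c : ℝ} (hc : 0 < c) :
    ∃ N : ℝ, 1 ≤ N ∧ K * N ^ e < c := by
  have hdecay := (tendsto_rpow_neg_atTop (neg_pos.2 he)).const_mul K
  rw [neg_neg, mul_zero] at hdecay
  exact ((eventually_ge_atTop 1).and (hdecay.eventually (gt_mem_nhds hc))).exists

theorem bddMeasCompSupp_indicator_one {R : Set (ℝ × ℝ)} (hR : IsCompact R) :
    BddMeasCompSupp (R.indicator 1) :=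
  ⟨measurable_one.indicator hR.measurableSet,
    ⟨1, fun p => (norm_indicator_le_norm_self _ p).trans_eq (by simp)⟩,
    HasCompactSupport.intro hR fun _ hp => indicator_of_notMem hp _⟩

theorem spaceTimeFourierInv_indicator_one {R : Set (ℝ × ℝ)} (hR : MeasurableSet R) (q : ℝ × ℝ) :
    spaceTimeFourierInv (R.indicator 1) q = (((2 * Real.pi) ^ 2 : ℝ) : ℂ)⁻¹ *
      ∫ p in R, exp (I * ((q.1 * p.1 + q.2 * p.2 : ℝ) : ℂ)) := by
  rw [spaceTimeFourierInv, ← integral_indicator hR]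
  congr 2 with p
  by_cases hp : p ∈ R <;> simp [hp]

theorem norm_spaceTimeFourierInv_indicator_Icc_ge {a c L M x t : ℝ} (hL : 0 ≤ L) (hM : 0 ≤ M)
    (hxt : |x| * L + |t| * M ≤ 1 / 2) :
    ((2 * Real.pi) ^ 2)⁻¹ * (L * M / 2) ≤
      ‖spaceTimeFourierInv ((Icc (a, c) (a + L, c + M)).indicator 1) (x, t)‖ := by
  rw [spaceTimeFourierInv_indicator_one measurableSet_Icc, norm_mul, norm_inv, Complex.norm_real,
    Real.norm_of_nonneg (by positivity)]
  refine mul_le_mul_of_nonneg_left ?_ (by positivity)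
  have hvol : volume.real (Icc (a, c) (a + L, c + M)) = L * M := by
    simp [measureReal_def, volume_Icc_prod_real, ENNReal.toReal_ofReal hL,
      ENNReal.toReal_ofReal hM]
  have hclose : ∀ p ∈ Icc (a, c) (a + L, c + M),
      ‖exp (I * ((x * p.1 + t * p.2 : ℝ) : ℂ)) - exp (I * ((x * a + t * c : ℝ) : ℂ))‖ ≤ 1 / 2 := by
    rintro ⟨ξ, τ⟩ ⟨⟨hξ₁, hτ₁⟩, hξ₂, hτ₂⟩
    refine (norm_exp_I_mul_ofReal_sub_exp_le _ _).trans ?_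
    calc |x * ξ + t * τ - (x * a + t * c)| ≤ |x| * |ξ - a| + |t| * |τ - c| := by
          rw [← abs_mul, ← abs_mul]
          exact (abs_add_le _ _).trans_eq' (by ring_nf)
      _ ≤ |x| * L + |t| * M := by
          gcongr
          · exact abs_le.mpr ⟨by linarith, by linarith⟩
          · exact abs_le.mpr ⟨by linarith, by linarith⟩
      _ ≤ 1 / 2 := hxt
  have := sub_mul_measureReal_le_norm_setIntegral (μ := volume)
    isCompact_Icc.measure_lt_top
    ((by fun_prop : Continuous fun p : ℝ × ℝ => exp (I * ((x * p.1 + t * p.2 : ℝ) : ℂ)))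
      |>.continuousOn.integrableOn_compact isCompact_Icc) hclose
  rw [Complex.norm_exp_I_mul_ofReal, hvol] at this
  linarith

def thinBox (a c ε : ℝ) : Set (ℝ × ℝ) := Icc (a, c) (a + ε ^ 2, c + 1)

theorem volume_thinBox (a c ε : ℝ) : volume (thinBox a c ε) = ENNReal.ofReal (ε ^ 2) := by
  rw [thinBox, volume_Icc_prod_real, add_sub_cancel_left, add_sub_cancel_left, ENNReal.ofReal_one,
    mul_one]

theorem ofReal_le_eLpNorm_mul_spaceTimeFourierInv_thinBox (a₁ c₁ a₂ c₂ : ℝ) {ε : ℝ}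
    (hε : 0 < ε) :
    ENNReal.ofReal (ε ^ 3 / (8 * (2 * Real.pi) ^ 4)) ≤
      eLpNorm (fun q => spaceTimeFourierInv ((thinBox a₁ c₁ ε).indicator 1) q *
        spaceTimeFourierInv ((thinBox a₂ c₂ ε).indicator 1) q) 2 volume := by
  set k := ((2 * Real.pi) ^ 2)⁻¹ * (ε ^ 2 * 1 / 2)
  set A : Set (ℝ × ℝ) := Icc (-(4 * ε ^ 2)⁻¹, -4⁻¹) ((4 * ε ^ 2)⁻¹, 4⁻¹)
  have hsize : ∀ a c, ∀ q ∈ A, k ≤ ‖spaceTimeFourierInv ((thinBox a c ε).indicator 1) q‖ := by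
    rintro a c ⟨x, t⟩ ⟨⟨hx₁, ht₁⟩, hx₂, ht₂⟩
    refine norm_spaceTimeFourierInv_indicator_Icc_ge (by positivity) zero_le_one ?_
    have hx : |x| * ε ^ 2 ≤ 4⁻¹ := by
      calc |x| * ε ^ 2 ≤ (4 * ε ^ 2)⁻¹ * ε ^ 2 := by gcongr; exact abs_le.mpr ⟨hx₁, hx₂⟩
        _ = 4⁻¹ := by field_simp
    linarith [abs_le.mpr ⟨ht₁, ht₂⟩]
  have hvol : volume A ^ (1 / (2 : ℝ≥0∞).toReal) = ENNReal.ofReal (2 * ε)⁻¹ := by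
    rw [volume_Icc_prod_real, sub_neg_eq_add, sub_neg_eq_add,
      ← ENNReal.ofReal_mul (by positivity),
      show ((4 * ε ^ 2)⁻¹ + (4 * ε ^ 2)⁻¹) * (4⁻¹ + 4⁻¹) = (2 * ε)⁻¹ ^ 2 by field_simp; ring,
      ENNReal.ofReal_sq_rpow_one_div_two (by positivity)]
  calc ENNReal.ofReal (ε ^ 3 / (8 * (2 * Real.pi) ^ 4))
      = ENNReal.ofReal (k ^ 2) * volume A ^ (1 / (2 : ℝ≥0∞).toReal) := by
        rw [hvol, ← ENNReal.ofReal_mul (by positivity)]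
        congr 1
        simp only [k]
        field_simp
        ring
    _ ≤ _ := ofReal_mul_measure_rpow_le_eLpNorm (sq_nonneg k) measurableSet_Icc two_ne_zero
        ENNReal.ofNat_ne_top fun q hq => by
          rw [norm_mul, sq]
          exact mul_le_mul (hsize _ _ q hq) (hsize _ _ q hq) (by positivity) (norm_nonneg _)

theorem weight_le_of_mem_thinBox {α a N r b : ℝ} (hN : 1 ≤ N) (ha : |a| = N) (hr : r ≤ 0)
    {p : ℝ × ℝ} (hp : p ∈ thinBox a (α * a ^ 3) N⁻¹) :
    (1 + |p.1|) ^ r * (1 + |p.2 - α * p.1 ^ 3|) ^ b ≤ N ^ r * (2 + 7 * |α|) ^ |b| := by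
  obtain ⟨⟨hξ₁, hτ₁⟩, hξ₂, hτ₂⟩ := hp
  have hδ : N⁻¹ ^ 2 ≤ 1 := pow_le_one₀ (by positivity) (inv_le_one_of_one_le₀ hN)
  have hξ : |p.1 - a| ≤ N⁻¹ ^ 2 := abs_le.mpr ⟨by linarith, by linarith⟩
  have hfreq : N ≤ 1 + |p.1| := by linarith [abs_sub_abs_le_abs_sub a p.1, abs_sub_comm p.1 a]
  have hmod : |p.2 - α * p.1 ^ 3| ≤ 1 + 7 * |α| := by
    have hcube := abs_cube_sub_cube_le hN ha.le hξ
    calc |p.2 - α * p.1 ^ 3| = |(p.2 - α * a ^ 3) - α * (p.1 ^ 3 - a ^ 3)| := by ring_nf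
      _ ≤ |p.2 - α * a ^ 3| + |α| * |p.1 ^ 3 - a ^ 3| := by rw [← abs_mul]; exact abs_sub _ _
      _ ≤ 1 + |α| * 7 := by gcongr; exact abs_le.mpr ⟨by linarith, by linarith⟩
      _ = 1 + 7 * |α| := by ring
  exact mul_le_mul (Real.rpow_le_rpow_of_nonpos (by linarith) hfreq hr)
    (Real.rpow_le_rpow_abs_of_one_le b (by linarith [abs_nonneg (p.2 - α * p.1 ^ 3)])
      (by linarith))
    (by positivity) (by positivity)

theorem eLpNorm_mul_norm_indicator_thinBox_le {w : ℝ × ℝ → ℝ} {a c ε m : ℝ} (hε : 0 ≤ ε)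
    (hm : 0 ≤ m) (hw : ∀ p ∈ thinBox a c ε, |w p| ≤ m) :
    eLpNorm (fun p => w p * ‖(thinBox a c ε).indicator (1 : ℝ × ℝ → ℂ) p‖) 2 volume ≤
      ENNReal.ofReal (m * ε) := by
  rw [ENNReal.ofReal_mul hm, ← ENNReal.ofReal_sq_rpow_one_div_two hε, ← volume_thinBox a c]
  refine eLpNorm_le_ofReal_mul_measure_rpow hm measurableSet_Icc two_ne_zero
    ENNReal.ofNat_ne_top fun p => ?_
  by_cases hp : p ∈ thinBox a c ε
  · simpa [hp] using hw p hp
  · simp [hp]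

theorem stmt_11_general (α s b₁ b₂ : ℝ) (hs : s < -(1/2)) :
    ∀ C : ℝ, 0 < C →
      ∃ g h : ℝ × ℝ → ℂ,  -- the space-time Fourier transforms of `u, v`
        BddMeasCompSupp g ∧ BddMeasCompSupp h ∧
        ¬ (eLpNorm (fun q : ℝ × ℝ =>
              spaceTimeFourierInv g q * spaceTimeFourierInv h q) 2 volume ≤
            ENNReal.ofReal C *
              (eLpNorm (fun p : ℝ × ℝ =>
                  ((1 + |p.1|) ^ (-(1/2) : ℝ) * (1 + |p.2 - α * p.1 ^ 3|) ^ b₁) *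
                    ‖g p‖) 2 volume *
               eLpNorm (fun p : ℝ × ℝ =>
                  ((1 + |p.1|) ^ s * (1 + |p.2 - p.1 ^ 3|) ^ b₂) * ‖h p‖) 2 volume)) := by
  intro C hC
  obtain ⟨N, hN, hsmall⟩ := exists_one_le_mul_rpow_lt (show s + 1 / 2 < 0 by linarith)
    (C * (2 + 7 * |α|) ^ |b₁| * 9 ^ |b₂|) (c := (8 * (2 * Real.pi) ^ 4)⁻¹) (by positivity)
  have hN0 : 0 < N := by linarith
  refine ⟨(thinBox N (α * N ^ 3) N⁻¹).indicator 1, (thinBox (-N) ((-N) ^ 3) N⁻¹).indicator 1,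
    bddMeasCompSupp_indicator_one isCompact_Icc, bddMeasCompSupp_indicator_one isCompact_Icc,
    fun hle => ?_⟩
  have hu := eLpNorm_mul_norm_indicator_thinBox_le (inv_nonneg.2 hN0.le) (by positivity)
    fun p hp => (abs_of_nonneg (by positivity)).trans_le <| weight_le_of_mem_thinBox
      (α := α) (r := -(1 / 2)) (b := b₁) hN (abs_of_pos hN0) (by norm_num) hp
  have hv := eLpNorm_mul_norm_indicator_thinBox_le (inv_nonneg.2 hN0.le) (by positivity)
    fun p hp => (abs_of_nonneg (by positivity)).trans_le <| weight_le_of_mem_thinBox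
      (α := 1) (r := s) (b := b₂) hN (by rw [abs_neg, abs_of_pos hN0]) (by linarith)
      (by rwa [one_mul])
  norm_num only [one_mul, abs_one] at hv
  have hchain := (ofReal_le_eLpNorm_mul_spaceTimeFourierInv_thinBox _ _ _ _ (inv_pos.2 hN0)).trans
    (hle.trans (mul_le_mul_right (mul_le_mul' hu hv) _))
  rw [← ENNReal.ofReal_mul (by positivity), ← ENNReal.ofReal_mul (by positivity),
    ENNReal.ofReal_le_ofReal_iff (by positivity)] at hchain
  have hrpow : N ^ (-(1 / 2) : ℝ) * N ^ s * N = N ^ (s + 1 / 2) := by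
    rw [← Real.rpow_add hN0, ← Real.rpow_add_one hN0.ne']
    ring_nf
  have hscaled : (8 * (2 * Real.pi) ^ 4)⁻¹ * N⁻¹ ^ 3 ≤
      C * (2 + 7 * |α|) ^ |b₁| * 9 ^ |b₂| * N ^ (s + 1 / 2) * N⁻¹ ^ 3 := by
    rw [← hrpow]
    convert hchain using 1 <;> field_simp
  exact hsmall.not_ge (le_of_mul_le_mul_right hscaled (by positivity))

theorem stmt_11 (α s b₁ b₂ : ℝ) (hα0 : 0 < α) (hα1 : α < 1) (hs : s < -(1/2)) :
    ∀ C : ℝ, 0 < C →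
      ∃ g h : ℝ × ℝ → ℂ,  -- the space-time Fourier transforms of `u, v`
        BddMeasCompSupp g ∧ BddMeasCompSupp h ∧
        ¬ (eLpNorm (fun q : ℝ × ℝ =>
              spaceTimeFourierInv g q * spaceTimeFourierInv h q) 2 volume ≤
            ENNReal.ofReal C *
              (eLpNorm (fun p : ℝ × ℝ =>
                  ((1 + |p.1|) ^ (-(1/2) : ℝ) * (1 + |p.2 - α * p.1 ^ 3|) ^ b₁) *
                    ‖g p‖) 2 volume *
               eLpNorm (fun p : ℝ × ℝ =>
                  ((1 + |p.1|) ^ s * (1 + |p.2 - p.1 ^ 3|) ^ b₂) * ‖h p‖) 2 volume)) :=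
  stmt_11_general α s b₁ b₂ hs
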